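/- arXiv:1311.5199 — 4 statements merged into one kernel-verified Lean document; each statement's English description precedes it below -/
import Mathlib

section
/- Let ℓ₁, ℓ₂ > 0 and m, n ≥ 1 be integers satisfying √3·n·ℓ₁ = m·ℓ₂, let e_k(x₁,x₂) = cos(k₁πx₁/ℓ₁)cos(k₂πx₂/ℓ₂) on Ω = (0,ℓ₁)×(0,ℓ₂), and let ρ = π²(m²/ℓ₁² + n²/ℓ₂²). Then ∫_Ω (∇e_(m,n)·∇e_(2m,0))·e_(m,n) dx = ∫_Ω (∇e_(m,n)·∇e_(m,3n))·e_(0,2n) dx = ∫_Ω (∇e_(0,2n)·∇e_(m,3n))·e_(m,n) dx = (3/16)·ρ·ℓ₁ℓ₂. -/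
/-!
Each `e_k` is a cosine in `x₁` times a cosine in `x₂`, so `(∇e_I·∇e_J) e_K` is a sum of two
separable terms and every coefficient is a combination of one-dimensional integrals over `[0, L]`
of `sin·sin·cos` and `cos·cos·cos` of multiples of `πx/L`. The product-to-sum formulas turn these
into integrals of `cos(jπx/L)`, `j ∈ ℤ`, which vanish unless `j = 0`. With the resonance condition
in the form `m²ℓ₂² = 3n²ℓ₁²`, all three coefficients come out as `3ρℓ₁ℓ₂/16`.
-/

open Real MeasureTheory

/-- The Neumann eigenfunction `e_k(x₁,x₂) = cos(k₁πx₁/ℓ₁)·cos(k₂πx₂/ℓ₂)`. -/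
noncomputable def ek (l₁ l₂ : ℝ) (k₁ k₂ : ℕ) (x₁ x₂ : ℝ) : ℝ :=
  Real.cos ((k₁ : ℝ) * Real.pi * x₁ / l₁) * Real.cos ((k₂ : ℝ) * Real.pi * x₂ / l₂)

/-- The Euclidean inner product of the gradients of two functions of two
real variables. -/
noncomputable def gradDot (f g : ℝ → ℝ → ℝ) (x₁ x₂ : ℝ) : ℝ :=
  deriv (fun t => f t x₂) x₁ * deriv (fun t => g t x₂) x₁ +
    deriv (fun t => f x₁ t) x₂ * deriv (fun t => g x₁ t) x₂

theorem integral_cos_int_mul_pi_div (L : ℝ) (j : ℤ) :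
    ∫ x in (0 : ℝ)..L, cos (j * π * x / L) = if j = 0 then L else 0 := by
  rcases eq_or_ne L 0 with rfl | hL
  · simp
  split_ifs with hj
  · simp [hj]
  have hc : (j : ℝ) * π / L ≠ 0 := by positivity
  calc ∫ x in (0 : ℝ)..L, cos (j * π * x / L)
      = ∫ x in (0 : ℝ)..L, cos (j * π / L * x) := by simp only [mul_div_right_comm]
    _ = 0 := by
      rw [intervalIntegral.integral_comp_mul_left cos hc, integral_cos,
        div_mul_cancel₀ _ hL, sin_int_mul_pi]
      simp

theorem cos_mul_cos_mul_cos (u v w : ℝ) :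
    cos u * cos v * cos w
      = (cos (u + v + w) + cos (u + v - w) + cos (u - v + w) + cos (u - v - w)) / 4 := by
  simp only [cos_add, cos_sub, sin_add, sin_sub]
  ring

theorem sin_mul_sin_mul_cos (u v w : ℝ) :
    sin u * sin v * cos w
      = (cos (u - v + w) + cos (u - v - w) - cos (u + v + w) - cos (u + v - w)) / 4 := by
  simp only [cos_add, cos_sub, sin_add, sin_sub]
  ring

noncomputable def cosCosCos (L : ℝ) (a b c : ℕ) (x : ℝ) : ℝ :=
  cos (a * π * x / L) * cos (b * π * x / L) * cos (c * π * x / L)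

noncomputable def sinSinCos (L : ℝ) (a b c : ℕ) (x : ℝ) : ℝ :=
  sin (a * π * x / L) * sin (b * π * x / L) * cos (c * π * x / L)

theorem integral_cosCosCos (L : ℝ) (a b c : ℕ) :
    ∫ x in (0 : ℝ)..L, cosCosCos L a b c x
      = ((if (a + b + c : ℤ) = 0 then L else 0) + (if (a + b - c : ℤ) = 0 then L else 0)
          + (if (a - b + c : ℤ) = 0 then L else 0) + (if (a - b - c : ℤ) = 0 then L else 0))
        / 4 := by
  have h : ∀ x, cosCosCos L a b c x = (cos (((a + b + c : ℤ) : ℝ) * π * x / L)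
      + cos (((a + b - c : ℤ) : ℝ) * π * x / L) + cos (((a - b + c : ℤ) : ℝ) * π * x / L)
      + cos (((a - b - c : ℤ) : ℝ) * π * x / L)) / 4 := by
    intro x
    rw [cosCosCos, cos_mul_cos_mul_cos]
    push_cast
    ring_nf
  simp only [h, intervalIntegral.integral_div]
  rw [intervalIntegral.integral_add, intervalIntegral.integral_add, intervalIntegral.integral_add]
  · simp only [integral_cos_int_mul_pi_div]
  all_goals exact Continuous.intervalIntegrable (by fun_prop) _ _

theorem integral_sinSinCos (L : ℝ) (a b c : ℕ) :
    ∫ x in (0 : ℝ)..L, sinSinCos L a b c x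
      = ((if (a - b + c : ℤ) = 0 then L else 0) + (if (a - b - c : ℤ) = 0 then L else 0)
          - (if (a + b + c : ℤ) = 0 then L else 0) - (if (a + b - c : ℤ) = 0 then L else 0))
        / 4 := by
  have h : ∀ x, sinSinCos L a b c x = (cos (((a - b + c : ℤ) : ℝ) * π * x / L)
      + cos (((a - b - c : ℤ) : ℝ) * π * x / L) - cos (((a + b + c : ℤ) : ℝ) * π * x / L)
      - cos (((a + b - c : ℤ) : ℝ) * π * x / L)) / 4 := by
    intro x
    rw [sinSinCos, sin_mul_sin_mul_cos]
    push_cast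
    ring_nf
  simp only [h, intervalIntegral.integral_div]
  rw [intervalIntegral.integral_sub, intervalIntegral.integral_sub, intervalIntegral.integral_add]
  · simp only [integral_cos_int_mul_pi_div]
  all_goals exact Continuous.intervalIntegrable (by fun_prop) _ _

theorem integral_integral_mul_add_mul {f₁ g₁ f₂ g₂ : ℝ → ℝ} {a b c d : ℝ} (p q : ℝ)
    (hf₁ : IntervalIntegrable f₁ volume a b) (hg₁ : IntervalIntegrable g₁ volume c d)
    (hf₂ : IntervalIntegrable f₂ volume a b) (hg₂ : IntervalIntegrable g₂ volume c d) :
    ∫ x in a..b, ∫ y in c..d, (p * f₁ x * g₁ y + q * f₂ x * g₂ y)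
      = p * (∫ x in a..b, f₁ x) * (∫ y in c..d, g₁ y)
        + q * (∫ x in a..b, f₂ x) * (∫ y in c..d, g₂ y) := by
  have inner : ∀ x, ∫ y in c..d, (p * f₁ x * g₁ y + q * f₂ x * g₂ y)
      = (∫ y in c..d, g₁ y) * p * f₁ x + (∫ y in c..d, g₂ y) * q * f₂ x := by
    intro x
    rw [intervalIntegral.integral_add (hg₁.const_mul _) (hg₂.const_mul _),
      intervalIntegral.integral_const_mul, intervalIntegral.integral_const_mul]
    ring
  simp only [inner]
  rw [intervalIntegral.integral_add (hf₁.const_mul _) (hf₂.const_mul _),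
    intervalIntegral.integral_const_mul, intervalIntegral.integral_const_mul]
  ring

theorem hasDerivAt_cos_mul_pi_div (L k x : ℝ) :
    HasDerivAt (fun t => cos (k * π * t / L)) (-(k * π / L) * sin (k * π * x / L)) x := by
  have h : HasDerivAt (fun t => k * π * t / L) (k * π / L) x := by
    simpa using ((hasDerivAt_id x).const_mul (k * π)).div_const L
  convert h.cos using 1
  ring

theorem deriv_ek_fst (l₁ l₂ : ℝ) (k₁ k₂ : ℕ) (x₁ x₂ : ℝ) :
    deriv (fun t => ek l₁ l₂ k₁ k₂ t x₂) x₁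
      = -(k₁ * π / l₁) * sin (k₁ * π * x₁ / l₁) * cos (k₂ * π * x₂ / l₂) :=
  ((hasDerivAt_cos_mul_pi_div l₁ k₁ x₁).mul_const _).deriv

theorem deriv_ek_snd (l₁ l₂ : ℝ) (k₁ k₂ : ℕ) (x₁ x₂ : ℝ) :
    deriv (fun t => ek l₁ l₂ k₁ k₂ x₁ t) x₂
      = cos (k₁ * π * x₁ / l₁) * (-(k₂ * π / l₂) * sin (k₂ * π * x₂ / l₂)) :=
  ((hasDerivAt_cos_mul_pi_div l₂ k₂ x₂).const_mul _).deriv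

theorem gradDot_ek_mul_ek (l₁ l₂ : ℝ) (a₁ a₂ b₁ b₂ c₁ c₂ : ℕ) (x₁ x₂ : ℝ) :
    gradDot (ek l₁ l₂ a₁ a₂) (ek l₁ l₂ b₁ b₂) x₁ x₂ * ek l₁ l₂ c₁ c₂ x₁ x₂
      = a₁ * b₁ * π ^ 2 / l₁ ^ 2 * sinSinCos l₁ a₁ b₁ c₁ x₁ * cosCosCos l₂ a₂ b₂ c₂ x₂
        + a₂ * b₂ * π ^ 2 / l₂ ^ 2 * cosCosCos l₁ a₁ b₁ c₁ x₁ * sinSinCos l₂ a₂ b₂ c₂ x₂ := by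
  rw [gradDot, deriv_ek_fst, deriv_ek_fst, deriv_ek_snd, deriv_ek_snd, ek, sinSinCos, sinSinCos,
    cosCosCos, cosCosCos]
  ring

theorem integral_integral_gradDot_ek_mul_ek (l₁ l₂ : ℝ) (a₁ a₂ b₁ b₂ c₁ c₂ : ℕ) :
    ∫ x₁ in (0 : ℝ)..l₁, ∫ x₂ in (0 : ℝ)..l₂,
        gradDot (ek l₁ l₂ a₁ a₂) (ek l₁ l₂ b₁ b₂) x₁ x₂ * ek l₁ l₂ c₁ c₂ x₁ x₂
      = a₁ * b₁ * π ^ 2 / l₁ ^ 2 * (∫ x in (0 : ℝ)..l₁, sinSinCos l₁ a₁ b₁ c₁ x)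
          * (∫ x in (0 : ℝ)..l₂, cosCosCos l₂ a₂ b₂ c₂ x)
        + a₂ * b₂ * π ^ 2 / l₂ ^ 2 * (∫ x in (0 : ℝ)..l₁, cosCosCos l₁ a₁ b₁ c₁ x)
          * (∫ x in (0 : ℝ)..l₂, sinSinCos l₂ a₂ b₂ c₂ x) := by
  simp only [gradDot_ek_mul_ek]
  exact integral_integral_mul_add_mul _ _
    (Continuous.intervalIntegrable (by unfold sinSinCos; fun_prop) _ _)
    (Continuous.intervalIntegrable (by unfold cosCosCos; fun_prop) _ _)
    (Continuous.intervalIntegrable (by unfold cosCosCos; fun_prop) _ _)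
    (Continuous.intervalIntegrable (by unfold sinSinCos; fun_prop) _ _)

/-- Under the hexagonal resonance condition `√3·n·ℓ₁ = m·ℓ₂`, the gradient
interaction coefficients satisfy
`⟨∇e_(m,n)·∇e_(2m,0), e_(m,n)⟩ = ⟨∇e_(m,n)·∇e_(m,3n), e_(0,2n)⟩ =
⟨∇e_(0,2n)·∇e_(m,3n), e_(m,n)⟩ = (3/16)ρℓ₁ℓ₂`,
where `ρ = π²(m²/ℓ₁² + n²/ℓ₂²)`. -/
theorem stmt_9 (l₁ l₂ : ℝ) (h₁ : 0 < l₁) (h₂ : 0 < l₂) (m n : ℕ)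
    (hm : 1 ≤ m) (hn : 1 ≤ n)
    (hres : Real.sqrt 3 * (n : ℝ) * l₁ = (m : ℝ) * l₂) :
    let ρ : ℝ := Real.pi ^ 2 * ((m : ℝ) ^ 2 / l₁ ^ 2 + (n : ℝ) ^ 2 / l₂ ^ 2)
    (∫ x₁ in (0 : ℝ)..l₁, ∫ x₂ in (0 : ℝ)..l₂,
        gradDot (ek l₁ l₂ m n) (ek l₁ l₂ (2 * m) 0) x₁ x₂ * ek l₁ l₂ m n x₁ x₂)
      = 3 / 16 * ρ * (l₁ * l₂) ∧
    (∫ x₁ in (0 : ℝ)..l₁, ∫ x₂ in (0 : ℝ)..l₂,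
        gradDot (ek l₁ l₂ m n) (ek l₁ l₂ m (3 * n)) x₁ x₂ * ek l₁ l₂ 0 (2 * n) x₁ x₂)
      = 3 / 16 * ρ * (l₁ * l₂) ∧
    (∫ x₁ in (0 : ℝ)..l₁, ∫ x₂ in (0 : ℝ)..l₂,
        gradDot (ek l₁ l₂ 0 (2 * n)) (ek l₁ l₂ m (3 * n)) x₁ x₂ * ek l₁ l₂ m n x₁ x₂)
      = 3 / 16 * ρ * (l₁ * l₂) := by
  dsimp only
  have hsq : (m : ℝ) ^ 2 * l₂ ^ 2 = 3 * n ^ 2 * l₁ ^ 2 := by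
    rw [← mul_pow, ← hres, mul_pow, mul_pow, sq_sqrt zero_le_three]
  simp only [integral_integral_gradDot_ek_mul_ek, integral_sinSinCos, integral_cosCosCos]
  -- `omega` decides from `1 ≤ m`, `1 ≤ n` which frequency combinations vanish
  simp (disch := omega) only [if_pos, if_neg]
  push_cast
  refine ⟨?_, ?_, ?_⟩ <;> field_simp
  · linear_combination 16 * l₁ * l₂ * hsq
  · linear_combination -16 * l₁ * l₂ * hsq
  · linear_combination -48 * l₁ * l₂ * hsq
end

section
/- Let σ > 0 and 𝔟₁, 𝔟₂ ∈ ℝ satisfy 𝔟₁ < 0, 𝔟₁ + 2𝔟₂ < 0, 𝔟₁ + 4𝔟₂ < 0, and 𝔟₁(𝔟₁ + 2𝔟₂) ≠ 8𝔟₂². Define F(y₁,y₂) = (σy₁ + (1/4)(𝔟₁+2𝔟₂)y₁³ + 2𝔟₂y₁y₂², σy₂ + 𝔟₁y₂³ + 𝔟₂y₂y₁²). Then F(y₁,y₂) = (0,0) if and only if (y₁,y₂) is one of the following nine points: the origin (0,0); the two strip points (0, ±s) with s = √(−σ/𝔟₁); the two rectangular points (±r, 0) with r = √(−4σ/(𝔟₁+2𝔟₂));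 and the four hexagonal points (±2c, ±c) (all four sign combinations) with c = √(−σ/(𝔟₁+4𝔟₂)). In particular F has exactly eight nonzero equilibrium points. -/
/-!
Writing `F = (y₁ P, y₂ Q)`, an equilibrium has `y₁ = 0` or `P = 0`, and `y₂ = 0` or `Q = 0`.
On an axis the remaining condition is a quadratic `t + a x² = 0` with `a < 0 ≤ t`, giving the
strips and the rectangles. Off the axes, `P` and `Q` are linear in `(y₁², y₂²)` and
`4 (P - Q) = (𝔟₁ - 2𝔟₂) (y₁² - 4 y₂²)`; since `𝔟₁(𝔟₁ + 2𝔟₂) - 8𝔟₂² = (𝔟₁ - 2𝔟₂)(𝔟₁ + 4𝔟₂)`,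
the nondegeneracy condition forces `y₁² = 4 y₂²`, and then `P = Q = σ + (𝔟₁ + 4𝔟₂) y₂²`,
giving the four hexagons.
-/

open Real

theorem add_mul_sq_eq_zero_iff {t a x : ℝ} (ht : 0 ≤ t) (ha : a < 0) :
    t + a * x ^ 2 = 0 ↔ x = √(-t / a) ∨ x = -√(-t / a) := by
  rw [← sq_eq_sq_iff_eq_or_eq_neg, sq_sqrt (div_nonneg_of_nonpos (by linarith) ha.le),
    eq_div_iff ha.ne]
  constructor <;> intro h <;> linear_combination h

section Equilibria

variable {σ b₁ b₂ y₁ y₂ : ℝ}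

theorem transition_eq_zero_iff :
    (σ * y₁ + 1 / 4 * (b₁ + 2 * b₂) * y₁ ^ 3 + 2 * b₂ * y₁ * y₂ ^ 2,
        σ * y₂ + b₁ * y₂ ^ 3 + b₂ * y₂ * y₁ ^ 2) = ((0 : ℝ), (0 : ℝ)) ↔
      (y₁ = 0 ∨ σ + 1 / 4 * (b₁ + 2 * b₂) * y₁ ^ 2 + 2 * b₂ * y₂ ^ 2 = 0) ∧
        (y₂ = 0 ∨ σ + b₁ * y₂ ^ 2 + b₂ * y₁ ^ 2 = 0) := by
  rw [Prod.mk.injEq, ← mul_eq_zero, ← mul_eq_zero]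
  ring_nf

theorem strip_equilibria_iff (hσ : 0 ≤ σ) (hb₁ : b₁ < 0) :
    y₁ = 0 ∧ σ + b₁ * y₂ ^ 2 + b₂ * y₁ ^ 2 = 0 ↔
      y₁ = 0 ∧ y₂ = √(-σ / b₁) ∨ y₁ = 0 ∧ y₂ = -√(-σ / b₁) := by
  rw [← and_or_left, ← add_mul_sq_eq_zero_iff hσ hb₁]
  refine and_congr_right fun hy₁ => ?_
  rw [hy₁]
  ring_nf

theorem rectangle_equilibria_iff (hσ : 0 ≤ σ) (hb₁₂ : b₁ + 2 * b₂ < 0) :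
    σ + 1 / 4 * (b₁ + 2 * b₂) * y₁ ^ 2 + 2 * b₂ * y₂ ^ 2 = 0 ∧ y₂ = 0 ↔
      y₁ = √(-4 * σ / (b₁ + 2 * b₂)) ∧ y₂ = 0 ∨ y₁ = -√(-4 * σ / (b₁ + 2 * b₂)) ∧ y₂ = 0 := by
  rw [← or_and_right, neg_mul, ← add_mul_sq_eq_zero_iff (by linarith) hb₁₂]
  refine and_congr_left fun hy₂ => ?_
  rw [hy₂]
  constructor
  · intro h
    linear_combination 4 * h
  · intro h
    linear_combination h / 4

theorem hexagon_equilibria_iff (hσ : 0 ≤ σ) (hb₁₄ : b₁ + 4 * b₂ < 0) (hb : b₁ ≠ 2 * b₂) :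
    σ + 1 / 4 * (b₁ + 2 * b₂) * y₁ ^ 2 + 2 * b₂ * y₂ ^ 2 = 0 ∧
        σ + b₁ * y₂ ^ 2 + b₂ * y₁ ^ 2 = 0 ↔
      y₁ = 2 * √(-σ / (b₁ + 4 * b₂)) ∧ y₂ = √(-σ / (b₁ + 4 * b₂)) ∨
        y₁ = -(2 * √(-σ / (b₁ + 4 * b₂))) ∧ y₂ = -√(-σ / (b₁ + 4 * b₂)) ∨
        y₁ = -(2 * √(-σ / (b₁ + 4 * b₂))) ∧ y₂ = √(-σ / (b₁ + 4 * b₂)) ∨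
        y₁ = 2 * √(-σ / (b₁ + 4 * b₂)) ∧ y₂ = -√(-σ / (b₁ + 4 * b₂)) := by
  have reduce : σ + 1 / 4 * (b₁ + 2 * b₂) * y₁ ^ 2 + 2 * b₂ * y₂ ^ 2 = 0 ∧
      σ + b₁ * y₂ ^ 2 + b₂ * y₁ ^ 2 = 0 ↔
        y₁ ^ 2 = (2 * y₂) ^ 2 ∧ σ + (b₁ + 4 * b₂) * y₂ ^ 2 = 0 := by
    constructor
    · rintro ⟨hP, hQ⟩
      have hPQ : (b₁ - 2 * b₂) * (y₁ ^ 2 - (2 * y₂) ^ 2) = 0 := by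
        linear_combination 4 * (hP - hQ)
      have hu := sub_eq_zero.mp ((mul_eq_zero.mp hPQ).resolve_left (sub_ne_zero.mpr hb))
      exact ⟨hu, by linear_combination hQ - b₂ * hu⟩
    · rintro ⟨hu, hc⟩
      exact ⟨by linear_combination hc + (b₁ + 2 * b₂) / 4 * hu,
        by linear_combination hc + b₂ * hu⟩
  rw [reduce, sq_eq_sq_iff_eq_or_eq_neg, add_mul_sq_eq_zero_iff hσ hb₁₄]
  constructor
  · rintro ⟨rfl | rfl, rfl | rfl⟩ <;> simp
  · rintro (⟨rfl, rfl⟩ | ⟨rfl, rfl⟩ | ⟨rfl, rfl⟩ | ⟨rfl, rfl⟩) <;> simp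

end Equilibria

/-- Complete classification of the equilibria of the truncated transition
field (with `𝔞 = 0`): under `𝔟₁ < 0`, `𝔟₁ + 2𝔟₂ < 0`, `𝔟₁ + 4𝔟₂ < 0` and
`𝔟₁(𝔟₁+2𝔟₂) ≠ 8𝔟₂²`, the zeros of `F` are exactly the origin, the two strip
points `(0, ±s)`, the two rectangular points `(±r, 0)`, and the four
hexagonal points `(±2c, ±c)`; in particular there are exactly eight nonzero
equilibrium points. -/
theorem stmt_15 (σ b₁ b₂ : ℝ) (hσ : 0 < σ) (hb₁ : b₁ < 0)
    (hb12 : b₁ + 2 * b₂ < 0) (hb14 : b₁ + 4 * b₂ < 0)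
    (hnd : b₁ * (b₁ + 2 * b₂) ≠ 8 * b₂ ^ 2) :
    let F : ℝ → ℝ → ℝ × ℝ := fun y₁ y₂ =>
      (σ * y₁ + 1 / 4 * (b₁ + 2 * b₂) * y₁ ^ 3 + 2 * b₂ * y₁ * y₂ ^ 2,
       σ * y₂ + b₁ * y₂ ^ 3 + b₂ * y₂ * y₁ ^ 2)
    let s : ℝ := Real.sqrt (-σ / b₁)
    let r : ℝ := Real.sqrt (-4 * σ / (b₁ + 2 * b₂))
    let c : ℝ := Real.sqrt (-σ / (b₁ + 4 * b₂))
    ∀ y₁ y₂ : ℝ, F y₁ y₂ = (0, 0) ↔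
      (y₁, y₂) = (0, 0) ∨
      (y₁, y₂) = (0, s) ∨ (y₁, y₂) = (0, -s) ∨
      (y₁, y₂) = (r, 0) ∨ (y₁, y₂) = (-r, 0) ∨
      (y₁, y₂) = (2 * c, c) ∨ (y₁, y₂) = (-(2 * c), -c) ∨
      (y₁, y₂) = (-(2 * c), c) ∨ (y₁, y₂) = (2 * c, -c) := by
  intro F s r c y₁ y₂
  have hb : b₁ ≠ 2 * b₂ := fun h => hnd (by rw [h]; ring)
  simp only [F, s, r, c]
  rw [transition_eq_zero_iff, or_and_right, and_or_left, and_or_left,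
    strip_equilibria_iff hσ.le hb₁, rectangle_equilibria_iff hσ.le hb12,
    hexagon_equilibria_iff hσ.le hb14 hb]
  simp only [Prod.mk.injEq, or_assoc]
end

section
/- Let σ > 0 and 𝔟₁, 𝔟₂ ∈ ℝ with 𝔟₁ + 4𝔟₂ < 0, set c = √(−σ/(𝔟₁+4𝔟₂)), and let F(y₁,y₂) = (σy₁ + (1/4)(𝔟₁+2𝔟₂)y₁³ + 2𝔟₂y₁y₂², σy₂ + 𝔟₁y₂³ + 𝔟₂y₂y₁²). Then the Jacobian matrix J = DF at the hexagonal equilibrium (2c, c) has trace(J) = 4(𝔟₁+𝔟₂)c² and det(J) = 4(𝔟₁+4𝔟₂)(𝔟₁−2𝔟₂)c⁴. In particular, if 𝔟₁ + 𝔟₂ < 0 then trace(J) < 0, and det(J) has sign opposite to the sign of 𝔟₁ − 2𝔟₂. -/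
/-!
Each partial derivative of the field is the derivative of a cubic in one variable. At `(2c, c)`
the equilibrium relation `σ = -(𝔟₁ + 4𝔟₂) c²` eliminates `σ` from the Jacobian entries, after
which trace and determinant factor; their signs follow from `c > 0` and `𝔟₁ + 4𝔟₂ < 0`.
-/

theorem deriv_cubic {𝕜 : Type*} [NontriviallyNormedField 𝕜] (p q r s x : 𝕜) :
    deriv (fun t => p + q * t + r * t ^ 2 + s * t ^ 3) x = q + 2 * r * x + 3 * s * x ^ 2 := by
  have hderiv := (((hasDerivAt_const x p).add ((hasDerivAt_id x).const_mul q)).add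
    ((hasDerivAt_pow 2 x).const_mul r)).add ((hasDerivAt_pow 3 x).const_mul s)
  exact (hderiv.congr_deriv (by norm_num; ring)).deriv

noncomputable section TransitionField

variable (σ b₁ b₂ : ℝ)

def transitionField₁ (y₁ y₂ : ℝ) : ℝ :=
  σ * y₁ + 1 / 4 * (b₁ + 2 * b₂) * y₁ ^ 3 + 2 * b₂ * y₁ * y₂ ^ 2

def transitionField₂ (y₁ y₂ : ℝ) : ℝ :=
  σ * y₂ + b₁ * y₂ ^ 3 + b₂ * y₂ * y₁ ^ 2

theorem deriv_transitionField₁_fst (y₁ y₂ : ℝ) :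
    deriv (fun t => transitionField₁ σ b₁ b₂ t y₂) y₁
      = σ + 3 / 4 * (b₁ + 2 * b₂) * y₁ ^ 2 + 2 * b₂ * y₂ ^ 2 := by
  have hcubic : (fun t => transitionField₁ σ b₁ b₂ t y₂)
      = fun t => 0 + (σ + 2 * b₂ * y₂ ^ 2) * t + 0 * t ^ 2 + 1 / 4 * (b₁ + 2 * b₂) * t ^ 3 := by
    funext t; simp only [transitionField₁]; ring
  rw [hcubic, deriv_cubic]; ring

theorem deriv_transitionField₁_snd (y₁ y₂ : ℝ) :
    deriv (fun t => transitionField₁ σ b₁ b₂ y₁ t) y₂ = 4 * b₂ * y₁ * y₂ := by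
  have hcubic : (fun t => transitionField₁ σ b₁ b₂ y₁ t)
      = fun t => (σ * y₁ + 1 / 4 * (b₁ + 2 * b₂) * y₁ ^ 3) + 0 * t + 2 * b₂ * y₁ * t ^ 2
          + 0 * t ^ 3 := by
    funext t; simp only [transitionField₁]; ring
  rw [hcubic, deriv_cubic]; ring

theorem deriv_transitionField₂_fst (y₁ y₂ : ℝ) :
    deriv (fun t => transitionField₂ σ b₁ b₂ t y₂) y₁ = 2 * b₂ * y₁ * y₂ := by
  have hcubic : (fun t => transitionField₂ σ b₁ b₂ t y₂)
      = fun t => (σ * y₂ + b₁ * y₂ ^ 3) + 0 * t + b₂ * y₂ * t ^ 2 + 0 * t ^ 3 := by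
    funext t; simp only [transitionField₂]; ring
  rw [hcubic, deriv_cubic]; ring

theorem deriv_transitionField₂_snd (y₁ y₂ : ℝ) :
    deriv (fun t => transitionField₂ σ b₁ b₂ y₁ t) y₂
      = σ + 3 * b₁ * y₂ ^ 2 + b₂ * y₁ ^ 2 := by
  have hcubic : (fun t => transitionField₂ σ b₁ b₂ y₁ t)
      = fun t => 0 + (σ + b₂ * y₁ ^ 2) * t + 0 * t ^ 2 + b₁ * t ^ 3 := by
    funext t; simp only [transitionField₂]; ring
  rw [hcubic, deriv_cubic]; ring

end TransitionField

theorem neg_mul_sq_sqrt_neg_div {σ β : ℝ} (hσ : 0 ≤ σ) (hβ : β < 0) :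
    -β * Real.sqrt (-σ / β) ^ 2 = σ := by
  rw [Real.sq_sqrt (div_nonneg_of_nonpos (by linarith) hβ.le)]
  field_simp [hβ.ne]

/-- Trace and determinant of the Jacobian of the truncated transition field
(with `𝔞 = 0`) at the hexagonal equilibrium `(2c, c)`, `c = √(-σ/(𝔟₁+4𝔟₂))`:
`tr J = 4(𝔟₁+𝔟₂)c²` and `det J = 4(𝔟₁+4𝔟₂)(𝔟₁−2𝔟₂)c⁴`; hence `tr J < 0`
when `𝔟₁+𝔟₂ < 0`, and `det J` has sign opposite to that of `𝔟₁−2𝔟₂`. -/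
theorem stmt_16 (σ b₁ b₂ : ℝ) (hσ : 0 < σ) (hb : b₁ + 4 * b₂ < 0) :
    let F₁ : ℝ → ℝ → ℝ := fun y₁ y₂ =>
      σ * y₁ + 1 / 4 * (b₁ + 2 * b₂) * y₁ ^ 3 + 2 * b₂ * y₁ * y₂ ^ 2
    let F₂ : ℝ → ℝ → ℝ := fun y₁ y₂ =>
      σ * y₂ + b₁ * y₂ ^ 3 + b₂ * y₂ * y₁ ^ 2
    let c : ℝ := Real.sqrt (-σ / (b₁ + 4 * b₂))
    let J₁₁ : ℝ := deriv (fun t => F₁ t c) (2 * c)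
    let J₁₂ : ℝ := deriv (fun t => F₁ (2 * c) t) c
    let J₂₁ : ℝ := deriv (fun t => F₂ t c) (2 * c)
    let J₂₂ : ℝ := deriv (fun t => F₂ (2 * c) t) c
    J₁₁ + J₂₂ = 4 * (b₁ + b₂) * c ^ 2 ∧
    J₁₁ * J₂₂ - J₁₂ * J₂₁ = 4 * (b₁ + 4 * b₂) * (b₁ - 2 * b₂) * c ^ 4 ∧
    (b₁ + b₂ < 0 → J₁₁ + J₂₂ < 0) ∧
    (0 < b₁ - 2 * b₂ → J₁₁ * J₂₂ - J₁₂ * J₂₁ < 0) ∧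
    (b₁ - 2 * b₂ < 0 → 0 < J₁₁ * J₂₂ - J₁₂ * J₂₁) ∧
    (b₁ - 2 * b₂ = 0 → J₁₁ * J₂₂ - J₁₂ * J₂₁ = 0) := by
  intro F₁ F₂ c J₁₁ J₁₂ J₂₁ J₂₂
  have hJ₁₁ : J₁₁ = _ := deriv_transitionField₁_fst σ b₁ b₂ (2 * c) c
  have hJ₁₂ : J₁₂ = _ := deriv_transitionField₁_snd σ b₁ b₂ (2 * c) c
  have hJ₂₁ : J₂₁ = _ := deriv_transitionField₂_fst σ b₁ b₂ (2 * c) c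
  have hJ₂₂ : J₂₂ = _ := deriv_transitionField₂_snd σ b₁ b₂ (2 * c) c
  have hσc : σ = -(b₁ + 4 * b₂) * c ^ 2 := (neg_mul_sq_sqrt_neg_div hσ.le hb).symm
  have hc : 0 < c := Real.sqrt_pos.2 (div_pos_of_neg_of_neg (neg_neg_of_pos hσ) hb)
  have htr : J₁₁ + J₂₂ = 4 * (b₁ + b₂) * c ^ 2 := by
    rw [hJ₁₁, hJ₂₂, hσc]; ring
  have hdet : J₁₁ * J₂₂ - J₁₂ * J₂₁ = 4 * (b₁ + 4 * b₂) * c ^ 4 * (b₁ - 2 * b₂) := by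
    rw [hJ₁₁, hJ₁₂, hJ₂₁, hJ₂₂, hσc]; ring
  have hscale : 4 * (b₁ + 4 * b₂) * c ^ 4 < 0 :=
    mul_neg_of_neg_of_pos (by linarith) (by positivity)
  refine ⟨htr, by rw [hdet]; ring, fun h => ?_, fun h => ?_, fun h => ?_, fun h => ?_⟩
  · rw [htr]; exact mul_neg_of_neg_of_pos (by linarith) (by positivity)
  · rw [hdet]; exact mul_neg_of_neg_of_pos hscale h
  · rw [hdet]; exact mul_pos_of_neg_of_neg hscale h
  · rw [hdet, h, mul_zero]
end

section
/- Let σ > 0, 𝔞, 𝔟₂ ∈ ℝ, 𝔟₁ < 0, set s = √(−σ/𝔟₁), and let F(y₁,y₂) = (σy₁ + 4𝔞y₁² + (1/4)(𝔟₁+2𝔟₂)y₁³ + 2𝔟₂y₁y₂², σy₂ + 𝔞y₁y₂ + 𝔟₁y₂³ + 𝔟₂y₂y₁²). Then the Jacobian J = DF at the strip equilibrium (0, s) is lower triangular with diagonal entries σ + 2𝔟₂s² = σ(𝔟₁ − 2𝔟₂)/𝔟₁ and σ + 3𝔟₁s² = −2σ; consequently det(J) = −2σ²(𝔟₁ − 2𝔟₂)/𝔟₁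 and the eigenvalues of J are σ(𝔟₁−2𝔟₂)/𝔟₁ and −2σ. -/
/-! Each partial map of `F` through `(0, s)` is a cubic in one variable, so every Jacobian entry
is read off from the derivative of a cubic; `F₁` vanishes on the `y₂`-axis, which makes `J`
triangular, and `s² = -σ/𝔟₁` turns the diagonal into the closed forms. A triangular `J` has its
diagonal entries as eigenvalues. -/

theorem hasDerivAt_cubic (c₀ c₁ c₂ c₃ x : ℝ) :
    HasDerivAt (fun t => c₀ + c₁ * t + c₂ * t ^ 2 + c₃ * t ^ 3)
      (c₁ + 2 * c₂ * x + 3 * c₃ * x ^ 2) x :=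
  (((((hasDerivAt_id' x).const_mul c₁).const_add c₀).fun_add
      ((hasDerivAt_pow 2 x).const_mul c₂)).fun_add
        ((hasDerivAt_pow 3 x).const_mul c₃)).congr_deriv (by norm_num; ring)

theorem deriv_eq_of_eq_cubic {f : ℝ → ℝ} (c₀ c₁ c₂ c₃ : ℝ)
    (hf : ∀ t, f t = c₀ + c₁ * t + c₂ * t ^ 2 + c₃ * t ^ 3) (x : ℝ) :
    deriv f x = c₁ + 2 * c₂ * x + 3 * c₃ * x ^ 2 := by
  rw [funext hf]
  exact (hasDerivAt_cubic c₀ c₁ c₂ c₃ x).deriv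

theorem sub_mul_sub_eq_zero_iff {R : Type*} [Ring R] [NoZeroDivisors R] (p q t : R) :
    (p - t) * (q - t) = 0 ↔ t = p ∨ t = q := by
  simp only [mul_eq_zero, sub_eq_zero, eq_comm]

/-- The Jacobian of the truncated transition field at the strip equilibrium
`(0, s)`, `s = √(-σ/𝔟₁)`, is lower triangular with diagonal entries
`σ + 2𝔟₂s² = σ(𝔟₁−2𝔟₂)/𝔟₁` and `σ + 3𝔟₁s² = −2σ`; hence
`det J = −2σ²(𝔟₁−2𝔟₂)/𝔟₁`, and the eigenvalues of `J` (the roots of its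
characteristic polynomial) are exactly `σ(𝔟₁−2𝔟₂)/𝔟₁` and `−2σ`. -/
theorem stmt_17 (σ a b₁ b₂ : ℝ) (hσ : 0 < σ) (hb₁ : b₁ < 0) :
    let F₁ : ℝ → ℝ → ℝ := fun y₁ y₂ =>
      σ * y₁ + 4 * a * y₁ ^ 2 + 1 / 4 * (b₁ + 2 * b₂) * y₁ ^ 3 + 2 * b₂ * y₁ * y₂ ^ 2
    let F₂ : ℝ → ℝ → ℝ := fun y₁ y₂ =>
      σ * y₂ + a * y₁ * y₂ + b₁ * y₂ ^ 3 + b₂ * y₂ * y₁ ^ 2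
    let s : ℝ := Real.sqrt (-σ / b₁)
    let J₁₁ : ℝ := deriv (fun t => F₁ t s) 0
    let J₁₂ : ℝ := deriv (fun t => F₁ 0 t) s
    let J₂₁ : ℝ := deriv (fun t => F₂ t s) 0
    let J₂₂ : ℝ := deriv (fun t => F₂ 0 t) s
    J₁₂ = 0 ∧
    J₁₁ = σ + 2 * b₂ * s ^ 2 ∧ J₁₁ = σ * (b₁ - 2 * b₂) / b₁ ∧
    J₂₂ = σ + 3 * b₁ * s ^ 2 ∧ J₂₂ = -2 * σ ∧
    J₁₁ * J₂₂ - J₁₂ * J₂₁ = -2 * σ ^ 2 * (b₁ - 2 * b₂) / b₁ ∧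
    (∀ t : ℝ, (J₁₁ - t) * (J₂₂ - t) - J₁₂ * J₂₁ = 0 ↔
      t = σ * (b₁ - 2 * b₂) / b₁ ∨ t = -2 * σ) := by
  intro F₁ F₂ s J₁₁ J₁₂ J₂₁ J₂₂
  have hs : s ^ 2 = -σ / b₁ := Real.sq_sqrt (div_nonneg_of_nonpos (neg_nonpos.2 hσ.le) hb₁.le)
  have hJ₁₂ : J₁₂ = 0 :=
    (deriv_eq_of_eq_cubic 0 0 0 0 (fun t => by simp [F₁]) s).trans (by ring)
  have hJ₁₁ : J₁₁ = σ + 2 * b₂ * s ^ 2 :=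
    (deriv_eq_of_eq_cubic 0 (σ + 2 * b₂ * s ^ 2) (4 * a) (1 / 4 * (b₁ + 2 * b₂))
      (fun t => by simp only [F₁]; ring) 0).trans (by ring)
  have hJ₂₂ : J₂₂ = σ + 3 * b₁ * s ^ 2 :=
    (deriv_eq_of_eq_cubic 0 σ 0 b₁ (fun t => by simp only [F₂]; ring) s).trans (by ring)
  have hJ₁₁' : J₁₁ = σ * (b₁ - 2 * b₂) / b₁ := by
    rw [hJ₁₁, hs]; field_simp [hb₁.ne]; ring
  have hJ₂₂' : J₂₂ = -2 * σ := by
    rw [hJ₂₂, hs]; field_simp [hb₁.ne]; ring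
  refine ⟨hJ₁₂, hJ₁₁, hJ₁₁', hJ₂₂, hJ₂₂', ?_, fun t => ?_⟩
  · rw [hJ₁₁', hJ₂₂', hJ₁₂]; ring
  · rw [hJ₁₁', hJ₂₂', hJ₁₂, zero_mul, sub_zero]
    exact sub_mul_sub_eq_zero_iff _ _ t
end
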